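/- arXiv:2101.12653 — 8 statements merged into one kernel-verified Lean document; each statement's English description precedes it below -/
import Mathlib

section
/- Let Γ : Fin N → Finset (Fin M) be a left-D-regular neighborhood map of a bipartite graph, i.e. |Γ(i)| = D for every left vertex i. Let A be a real number and K a natural number, and assume that for every S ⊆ Fin N with |S| ≤ K one has |⋃_{i∈S} Γ(i)| ≥ A·|S|. Then for every S ⊆ Fin N with |S| ≤ K, the number of right vertices j ∈ Fin M that belong to Γ(i) for exactly one i ∈ S is at least (2A − D)·|S|. -/
open Finset

namespace Finset

variable {ι α : Type*} [Fintype α] [DecidableEq α]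

def uniqueNeighbors (Γ : ι → Finset α) (S : Finset ι) : Finset α :=
  univ.filter fun j => #(S.filter fun i => j ∈ Γ i) = 1

theorem sum_card_filter_mem_eq_sum_card (Γ : ι → Finset α) (S : Finset ι) :
    ∑ j, #(S.filter fun i => j ∈ Γ i) = ∑ i ∈ S, #(Γ i) := by
  have := sum_card_bipartiteAbove_eq_sum_card_bipartiteBelow (s := S) (t := univ)
    (r := fun i j => j ∈ Γ i)
  simpa [bipartiteAbove, bipartiteBelow] using this.symm

/-- A neighbor of `S` that is not a unique neighbor has at least two neighbors in `S`. -/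
theorem two_mul_card_biUnion_le (Γ : ι → Finset α) (S : Finset ι) :
    2 * #(S.biUnion Γ) ≤ ∑ i ∈ S, #(Γ i) + #(uniqueNeighbors Γ S) := by
  set deg := fun j => #(S.filter fun i => j ∈ Γ i)
  have hdeg (j : α) : j ∈ S.biUnion Γ ↔ 0 < deg j := by
    simp [deg, card_pos, Finset.Nonempty]
  calc 2 * #(S.biUnion Γ) = ∑ j, if j ∈ S.biUnion Γ then 2 else 0 := by
        rw [sum_ite_mem, univ_inter, sum_const, smul_eq_mul, mul_comm]
    _ = ∑ j, if 0 < deg j then 2 else 0 := by simp only [hdeg]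
    _ ≤ ∑ j, (deg j + if deg j = 1 then 1 else 0) :=
        sum_le_sum fun j _ => by split_ifs <;> omega
    _ = ∑ i ∈ S, #(Γ i) + #(uniqueNeighbors Γ S) := by
        rw [sum_add_distrib, sum_card_filter_mem_eq_sum_card, uniqueNeighbors, card_filter]

end Finset

/-- Unique-neighbor bound for bipartite expanders: if `Γ` is left-`D`-regular
and every `S` with `|S| ≤ K` satisfies `|Γ(S)| ≥ A·|S|`, then every such `S` has at least
`(2A − D)·|S|` unique neighbors (right vertices adjacent to exactly one `i ∈ S`). -/
theorem stmt_4 {N M : ℕ} (D : ℕ) (Γ : Fin N → Finset (Fin M))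
    (hreg : ∀ i, (Γ i).card = D) (A : ℝ) (K : ℕ)
    (hexp : ∀ S : Finset (Fin N), S.card ≤ K → A * S.card ≤ ((S.biUnion Γ).card : ℝ)) :
    ∀ S : Finset (Fin N), S.card ≤ K →
      (2 * A - D) * S.card ≤
        ((univ.filter fun j => (S.filter fun i => j ∈ Γ i).card = 1).card : ℝ) := by
  intro S hS
  have hcount : 2 * #(S.biUnion Γ) ≤ D * #S + #(uniqueNeighbors Γ S) := by
    simpa [hreg, mul_comm] using two_mul_card_biUnion_le Γ S
  have hcountR : 2 * (#(S.biUnion Γ) : ℝ) ≤ D * #S + #(uniqueNeighbors Γ S) := by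
    exact_mod_cast hcount
  rw [uniqueNeighbors] at hcountR
  linarith [hexp S hS]
end

section
/- Let B₁, …, B_D be M×N matrices with entries in {0,1} such that each column of each Bᵢ contains exactly one entry equal to 1, and suppose the sum B = Σᵢ₌₁^D Bᵢ also has all entries in {0,1}. Then for every set S of column indices, Σᵢ₌₁^D #{ j : exactly one ℓ ∈ S has (Bᵢ)_{j,ℓ} = 1 } ≥ #{ j : exactly one ℓ ∈ S has B_{j,ℓ} = 1 }. -/
open Finset

/-- If `{0,1}`-matrices `B₁, …, B_D` each have exactly one `1` per column and
their sum `B` still has `{0,1}` entries, then for every set `S` of columns the total number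
of rows that are a unique neighbor of `S` within some block `Bᵢ` is at least the number of
rows that are a unique neighbor of `S` in `B`. -/
theorem stmt_5 {M N D : ℕ} (B : Fin D → Matrix (Fin M) (Fin N) ℝ)
    (hentries : ∀ i j ℓ, B i j ℓ = 0 ∨ B i j ℓ = 1)
    (hcol : ∀ i ℓ, (univ.filter fun j => B i j ℓ = 1).card = 1)
    (hsum : ∀ j ℓ, (∑ i, B i) j ℓ = 0 ∨ (∑ i, B i) j ℓ = 1) :
    ∀ S : Finset (Fin N),
      (univ.filter fun j => (S.filter fun ℓ => (∑ i, B i) j ℓ = 1).card = 1).card ≤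
        ∑ i, (univ.filter fun j => (S.filter fun ℓ => B i j ℓ = 1).card = 1).card := by
  intro S
  have happ : ∀ j ℓ, (∑ i, B i) j ℓ = ∑ i, B i j ℓ := by
    intro j ℓ
    simp [Matrix.sum_apply]
  calc (univ.filter fun j => (S.filter fun ℓ => (∑ i, B i) j ℓ = 1).card = 1).card
      ≤ (univ.biUnion fun i =>
          univ.filter fun j => (S.filter fun ℓ => B i j ℓ = 1).card = 1).card := by
        apply Finset.card_le_card
        intro j hj
        simp only [mem_filter, mem_univ, true_and] at hj
        obtain ⟨ℓ₀, hℓ₀⟩ := Finset.card_eq_one.mp hj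
        have hℓ₀S : ℓ₀ ∈ S ∧ (∑ i, B i) j ℓ₀ = 1 := by
          have := hℓ₀ ▸ Finset.mem_singleton_self ℓ₀
          simpa using Finset.mem_filter.mp (hℓ₀ ▸ Finset.mem_singleton_self ℓ₀)
        -- find i with B i j ℓ₀ = 1
        have h1 : ∑ i, B i j ℓ₀ = 1 := by rw [← happ]; exact hℓ₀S.2
        have : ∃ i, B i j ℓ₀ = 1 := by
          by_contra h
          push_neg at h
          have : ∑ i, B i j ℓ₀ = 0 := Finset.sum_eq_zero fun i _ =>
            (hentries i j ℓ₀).resolve_right (h i)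
          rw [this] at h1; norm_num at h1
        obtain ⟨i, hi⟩ := this
        -- show other columns in S are zero for B i
        have hother : ∀ ℓ ∈ S, ℓ ≠ ℓ₀ → B i j ℓ = 0 := by
          intro ℓ hℓ hne
          have hzero : (∑ k, B k) j ℓ = 0 := by
            rcases hsum j ℓ with h0 | h1'
            · exact h0
            · exfalso
              have : ℓ ∈ S.filter fun ℓ => (∑ i, B i) j ℓ = 1 :=
                Finset.mem_filter.mpr ⟨hℓ, h1'⟩
              rw [hℓ₀] at this
              exact hne (Finset.mem_singleton.mp this)
          have hsumz : ∑ k, B k j ℓ = 0 := by rw [← happ]; exact hzero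
          have hnn : ∀ k ∈ (univ : Finset (Fin D)), 0 ≤ B k j ℓ := by
            intro k _
            rcases hentries k j ℓ with h | h <;> rw [h] <;> norm_num
          have := (Finset.sum_eq_zero_iff_of_nonneg hnn).mp hsumz
          exact this i (mem_univ i)
        refine Finset.mem_biUnion.mpr ⟨i, mem_univ i, ?_⟩
        simp only [mem_filter, mem_univ, true_and]
        rw [Finset.card_eq_one]
        refine ⟨ℓ₀, Finset.ext fun ℓ => ?_⟩
        simp only [mem_filter, mem_singleton]
        constructor
        · rintro ⟨hℓ, hb⟩
          by_contra hne
          rw [hother ℓ hℓ hne] at hb; norm_num at hb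
        · rintro rfl; exact ⟨hℓ₀S.1, hi⟩
    _ ≤ ∑ i, (univ.filter fun j => (S.filter fun ℓ => B i j ℓ = 1).card = 1).card :=
        Finset.card_biUnion_le
end

section
/- Let H be a Hadamard matrix of order M (entries in {−1,1}, Hᵀ H = M·I). Let B₁, …, B_D be M×N matrices with entries in {0,1}, each column of each Bᵢ containing exactly one entry equal to 1, and suppose B = Σᵢ₌₁^D Bᵢ has all entries in {0,1}. Let A be a real number and K a natural number, and assume that for every set S of column indices with |S| ≤ K, #{ j : ∃ ℓ ∈ S, B_{j,ℓ} = 1 } ≥ A·|S|. Then for every ternary vector v ∈ ℝᴺ with ‖v‖₀ ≤ K, Σᵢ₌₁^D ‖(H·Bᵢ)·v‖₂² ≥ M·(2A − D)·‖v‖₀. -/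
/-!
Because `Hᵀ H = M • 1`, multiplying by `H` scales squared `ℓ₂` norms by `M`, so it suffices to
show `∑ᵢ ‖Bᵢ v‖² ≥ 2 |Γ(S)| - D |S|` for `S = supp v` and then use expansion, `|Γ(S)| ≥ A |S|`.
Go row by row. A row `j` met by exactly one edge `(i, ℓ)` with `ℓ ∈ S` has `(Bᵢ v)ⱼ = v ℓ = ±1`,
so it contributes at least `1 = 2 - 1`; any other row of `Γ(S)` is met by at least two such edges.
Hence row `j` contributes at least `2 [j ∈ Γ(S)] - eⱼ`, where `eⱼ` counts those edges, and
`∑ⱼ eⱼ = D |S|` because every column of every `Bᵢ` holds exactly one `1`.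
-/

open Matrix Finset

theorem sum_sq_mulVec_of_transpose_mul_self {m n : Type*} [Fintype m] [Fintype n]
    [DecidableEq n] (H : Matrix m n ℝ) {c : ℝ} (hH : Hᵀ * H = c • 1) (w : n → ℝ) :
    ∑ j, (H *ᵥ w) j ^ 2 = c * ∑ j, w j ^ 2 := by
  calc ∑ j, (H *ᵥ w) j ^ 2 = H *ᵥ w ⬝ᵥ H *ᵥ w := by simp only [dotProduct, sq]
    _ = w ⬝ᵥ (Hᵀ * H) *ᵥ w := by
      rw [dotProduct_mulVec, ← mulVec_transpose, mulVec_mulVec, dotProduct_comm]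
    _ = c * ∑ j, w j ^ 2 := by
      rw [hH, smul_mulVec, one_mulVec, dotProduct_smul, smul_eq_mul]
      simp only [dotProduct, sq]

section Incidences

variable {ι m κ : Type*} [Fintype ι] [Fintype κ]

/-- The edges `(i, ℓ)` of the expander joining row `j` to the support of `v`, labelled by the
block `Bᵢ` they lie in. -/
noncomputable def incidences (B : ι → Matrix m κ ℝ) (v : κ → ℝ) (j : m) : Finset (ι × κ) :=
  {p ∈ (univ : Finset ι) ×ˢ ({ℓ | v ℓ ≠ 0} : Finset κ) | B p.1 j p.2 = 1}

variable {B : ι → Matrix m κ ℝ} {v : κ → ℝ}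

theorem mem_incidences {j : m} {i : ι} {ℓ : κ} :
    (i, ℓ) ∈ incidences B v j ↔ B i j ℓ = 1 ∧ v ℓ ≠ 0 := by
  simp [incidences, and_comm]

theorem mulVec_apply_eq_of_incidences_eq_singleton (hB : ∀ i j ℓ, B i j ℓ = 0 ∨ B i j ℓ = 1)
    {j : m} {i₀ : ι} {ℓ₀ : κ} (h : incidences B v j = {(i₀, ℓ₀)}) :
    (B i₀ *ᵥ v) j = v ℓ₀ := by
  have hmem : (i₀, ℓ₀) ∈ incidences B v j := h ▸ mem_singleton_self _
  rw [mulVec, dotProduct, sum_eq_single ℓ₀, (mem_incidences.mp hmem).1, one_mul]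
  · intro ℓ _ hℓ
    have hnot : (i₀, ℓ) ∉ incidences B v j := by simp [h, hℓ]
    rw [mem_incidences, not_and_or, not_not] at hnot
    rcases hnot with hB1 | hv0
    · rw [(hB i₀ j ℓ).resolve_right hB1, zero_mul]
    · rw [hv0, mul_zero]
  · simp

theorem two_sub_card_incidences_le_sum_sq (hB : ∀ i j ℓ, B i j ℓ = 0 ∨ B i j ℓ = 1)
    (hv : ∀ ℓ, v ℓ = -1 ∨ v ℓ = 0 ∨ v ℓ = 1) {j : m} (hne : (incidences B v j).Nonempty) :
    2 - (#(incidences B v j) : ℝ) ≤ ∑ i, (B i *ᵥ v) j ^ 2 := by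
  obtain hcard | hcard := (Nat.one_le_iff_ne_zero.mpr hne.card_pos.ne').eq_or_lt
  · obtain ⟨⟨i₀, ℓ₀⟩, hsing⟩ := card_eq_one.mp hcard.symm
    have hv₀ : v ℓ₀ ^ 2 = 1 := by
      have := (mem_incidences.mp (hsing ▸ mem_singleton_self _)).2
      rcases hv ℓ₀ with h | h | h <;> simp_all
    calc 2 - (#(incidences B v j) : ℝ) = v ℓ₀ ^ 2 := by rw [← hcard, hv₀]; norm_num
      _ = (B i₀ *ᵥ v) j ^ 2 := by rw [mulVec_apply_eq_of_incidences_eq_singleton hB hsing]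
      _ ≤ ∑ i, (B i *ᵥ v) j ^ 2 :=
        single_le_sum (fun i _ => sq_nonneg ((B i *ᵥ v) j)) (mem_univ i₀)
  · have : (2 : ℝ) ≤ #(incidences B v j) := by exact_mod_cast hcard
    have : 0 ≤ ∑ i, (B i *ᵥ v) j ^ 2 := sum_nonneg fun i _ => sq_nonneg _
    linarith

theorem sum_card_incidences [Fintype m] (hcol : ∀ i ℓ, #{j | B i j ℓ = 1} = 1) :
    ∑ j, #(incidences B v j) = Fintype.card ι * #{ℓ | v ℓ ≠ 0} := by
  classical
  calc ∑ j, #(incidences B v j)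
      = ∑ p ∈ (univ : Finset ι) ×ˢ ({ℓ | v ℓ ≠ 0} : Finset κ), #{j | B p.1 j p.2 = 1} :=
        sum_card_bipartiteAbove_eq_sum_card_bipartiteBelow _
    _ = Fintype.card ι * #{ℓ | v ℓ ≠ 0} := by simp [hcol, card_product]

theorem incidences_nonempty_of_sum_apply_eq_one (hB : ∀ i j ℓ, B i j ℓ = 0 ∨ B i j ℓ = 1)
    {j : m} {ℓ : κ} (hℓ : v ℓ ≠ 0) (h : (∑ i, B i) j ℓ = 1) : (incidences B v j).Nonempty := by
  rw [Matrix.sum_apply] at h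
  obtain ⟨i, -, hi⟩ := exists_ne_zero_of_sum_ne_zero (h ▸ one_ne_zero)
  exact ⟨(i, ℓ), mem_incidences.mpr ⟨(hB i j ℓ).resolve_left hi, hℓ⟩⟩

theorem two_mul_card_sub_le_sum_sum_sq [Fintype m] (hB : ∀ i j ℓ, B i j ℓ = 0 ∨ B i j ℓ = 1)
    (hcol : ∀ i ℓ, #{j | B i j ℓ = 1} = 1) (hv : ∀ ℓ, v ℓ = -1 ∨ v ℓ = 0 ∨ v ℓ = 1)
    {Γ : Finset m} (hΓ : ∀ j ∈ Γ, (incidences B v j).Nonempty) :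
    2 * (#Γ : ℝ) - Fintype.card ι * #{ℓ | v ℓ ≠ 0} ≤ ∑ i, ∑ j, (B i *ᵥ v) j ^ 2 := by
  classical
  calc 2 * (#Γ : ℝ) - Fintype.card ι * #{ℓ | v ℓ ≠ 0}
      = ∑ j, ((if j ∈ Γ then 2 else 0) - (#(incidences B v j) : ℝ)) := by
        rw [sum_sub_distrib, sum_ite_mem, univ_inter, sum_const, nsmul_eq_mul, mul_comm,
          ← Nat.cast_sum, sum_card_incidences hcol]
        push_cast; rfl
    _ ≤ ∑ j, ∑ i, (B i *ᵥ v) j ^ 2 := by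
        refine sum_le_sum fun j _ => ?_
        split_ifs with hj
        · exact two_sub_card_incidences_le_sum_sq hB hv (hΓ j hj)
        · have : 0 ≤ ∑ i, (B i *ᵥ v) j ^ 2 := sum_nonneg fun i _ => sq_nonneg _
          linarith [(#(incidences B v j)).cast_nonneg (α := ℝ)]
    _ = ∑ i, ∑ j, (B i *ᵥ v) j ^ 2 := sum_comm

end Incidences

open Classical in
theorem stmt_7_general {M N D : ℕ} (H : Matrix (Fin M) (Fin M) ℝ)
    (hH : Hᵀ * H = (M : ℝ) • 1)
    (B : Fin D → Matrix (Fin M) (Fin N) ℝ)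
    (hBentries : ∀ i j ℓ, B i j ℓ = 0 ∨ B i j ℓ = 1)
    (hcol : ∀ i ℓ, (univ.filter fun j => B i j ℓ = 1).card = 1)
    (A : ℝ) (K : ℕ)
    (hexp : ∀ S : Finset (Fin N), S.card ≤ K →
      A * S.card ≤ ((univ.filter fun j => ∃ ℓ ∈ S, (∑ i, B i) j ℓ = 1).card : ℝ))
    (v : Fin N → ℝ) (hv : ∀ ℓ, v ℓ = -1 ∨ v ℓ = 0 ∨ v ℓ = 1)
    (hsupp : (univ.filter fun ℓ => v ℓ ≠ 0).card ≤ K) :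
    (M : ℝ) * (2 * A - D) * (univ.filter fun ℓ => v ℓ ≠ 0).card ≤
      ∑ i, ∑ j, ((H * B i).mulVec v j) ^ 2 := by
  have hΓ : ∀ j ∈ univ.filter fun j => ∃ ℓ ∈ univ.filter (fun ℓ => v ℓ ≠ 0), (∑ i, B i) j ℓ = 1,
      (incidences B v j).Nonempty := by
    intro j hj
    obtain ⟨ℓ, hℓ, hsum⟩ := (mem_filter.mp hj).2
    exact incidences_nonempty_of_sum_apply_eq_one hBentries (mem_filter.mp hℓ).2 hsum
  have hcore := two_mul_card_sub_le_sum_sum_sq hBentries hcol hv hΓ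
  rw [Fintype.card_fin] at hcore
  have hexpS := hexp _ hsupp
  calc (M : ℝ) * (2 * A - D) * (univ.filter fun ℓ => v ℓ ≠ 0).card
      ≤ M * ∑ i, ∑ j, (B i *ᵥ v) j ^ 2 := by
        rw [mul_assoc]
        exact mul_le_mul_of_nonneg_left (by linarith) M.cast_nonneg
    _ = ∑ i, ∑ j, ((H * B i) *ᵥ v) j ^ 2 := by
        simp_rw [← mulVec_mulVec, sum_sq_mulVec_of_transpose_mul_self H hH, mul_sum]

open Classical in
/-- Key ℓ₂ lower bound for the expander-based pooling matrix: with `H` a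
Hadamard matrix of order `M` and `B = Σᵢ Bᵢ` the biadjacency matrix of a left-`D`-regular
`(N,M,D,K,A)`-expander decomposed into one-edge-per-column blocks, every ternary `v` with
`‖v‖₀ ≤ K` satisfies `Σᵢ ‖(H·Bᵢ)v‖₂² ≥ M·(2A − D)·‖v‖₀`. -/
theorem stmt_7 {M N D : ℕ} (H : Matrix (Fin M) (Fin M) ℝ)
    (hHentries : ∀ i j, H i j = -1 ∨ H i j = 1)
    (hH : Hᵀ * H = (M : ℝ) • 1)
    (B : Fin D → Matrix (Fin M) (Fin N) ℝ)
    (hBentries : ∀ i j ℓ, B i j ℓ = 0 ∨ B i j ℓ = 1)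
    (hcol : ∀ i ℓ, (univ.filter fun j => B i j ℓ = 1).card = 1)
    (hsum : ∀ j ℓ, (∑ i, B i) j ℓ = 0 ∨ (∑ i, B i) j ℓ = 1)
    (A : ℝ) (K : ℕ)
    (hexp : ∀ S : Finset (Fin N), S.card ≤ K →
      A * S.card ≤ ((univ.filter fun j => ∃ ℓ ∈ S, (∑ i, B i) j ℓ = 1).card : ℝ))
    (v : Fin N → ℝ) (hv : ∀ ℓ, v ℓ = -1 ∨ v ℓ = 0 ∨ v ℓ = 1)
    (hsupp : (univ.filter fun ℓ => v ℓ ≠ 0).card ≤ K) :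
    (M : ℝ) * (2 * A - D) * (univ.filter fun ℓ => v ℓ ≠ 0).card ≤
      ∑ i, ∑ j, ((H * B i).mulVec v j) ^ 2 :=
  stmt_7_general H hH B hBentries hcol A K hexp v hv hsupp
end

section
/- Let H be a Hadamard matrix of order M ≥ 1 (entries in {−1,1}, Hᵀ H = M·I), let z ∈ ℤ^M, and let n ∈ ℝ^M. Let y* ∈ ℤ^M be the coordinatewise nearest-integer rounding of H⁻¹·(H·(z : ℝ^M) + n). Then Σⱼ (y*ⱼ − zⱼ)² ≤ 4 · ‖n‖₂² / M. -/
open Matrix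

/-!
Since `H / √M` is orthogonal, `w := H⁻¹ n` has
`‖w‖² = ‖n‖² / M`. Rounding commutes with integer translation, so `y - z = round w`, and
`|round t| ≤ 2 |t|` coordinatewise because `0` is no closer to `t` than `round t` is.
-/

theorem abs_round_le_two_mul_abs {α : Type*} [Field α] [LinearOrder α] [IsStrictOrderedRing α]
    [FloorRing α] (x : α) : |(round x : α)| ≤ 2 * |x| := by
  have h := round_le x 0
  rw [Int.cast_zero, sub_zero, abs_sub_comm] at h
  calc |(round x : α)| = |((round x : α) - x) + x| := by rw [sub_add_cancel]
    _ ≤ |(round x : α) - x| + |x| := abs_add_le _ _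
    _ ≤ 2 * |x| := by linarith

theorem sq_round_le_four_mul_sq {α : Type*} [Field α] [LinearOrder α] [IsStrictOrderedRing α]
    [FloorRing α] (x : α) : (round x : α) ^ 2 ≤ 4 * x ^ 2 := by
  calc (round x : α) ^ 2 ≤ (2 * x) ^ 2 := by
        rw [sq_le_sq, abs_mul, abs_two]
        exact abs_round_le_two_mul_abs x
    _ = 4 * x ^ 2 := by ring

namespace Matrix

variable {ι : Type*} [Fintype ι] [DecidableEq ι]

theorem mulVec_dotProduct_mulVec_self_of_transpose_mul_self {R : Type*} [CommRing R]
    {H : Matrix ι ι R} {c : R} (hH : Hᵀ * H = c • 1) (v : ι → R) :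
    (H *ᵥ v) ⬝ᵥ (H *ᵥ v) = c * (v ⬝ᵥ v) := by
  rw [dotProduct_mulVec, ← mulVec_transpose, mulVec_mulVec, hH, smul_mulVec, one_mulVec,
    smul_dotProduct, smul_eq_mul]

variable {K : Type*} [Field K] {H : Matrix ι ι K} {c : K}

theorem isUnit_det_of_transpose_mul_self (hc : c ≠ 0) (hH : Hᵀ * H = c • 1) : IsUnit H.det :=
  isUnit_det_of_left_inverse (B := c⁻¹ • Hᵀ) <| by
    rw [smul_mul, hH, smul_smul, inv_mul_cancel₀ hc, one_smul]

theorem inv_mulVec_dotProduct_inv_mulVec_self_of_transpose_mul_self (hc : c ≠ 0)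
    (hH : Hᵀ * H = c • 1) (v : ι → K) : (H⁻¹ *ᵥ v) ⬝ᵥ (H⁻¹ *ᵥ v) = (v ⬝ᵥ v) / c := by
  have hdet := isUnit_det_of_transpose_mul_self hc hH
  have h := mulVec_dotProduct_mulVec_self_of_transpose_mul_self hH (H⁻¹ *ᵥ v)
  rw [mulVec_mulVec, mul_nonsing_inv H hdet, one_mulVec] at h
  rw [h, mul_div_cancel_left₀ _ hc]

end Matrix

theorem dotProduct_self_eq_sum_sq {ι R : Type*} [Fintype ι] [CommSemiring R] (v : ι → R) :
    v ⬝ᵥ v = ∑ i, v i ^ 2 := by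
  simp only [dotProduct, sq]

theorem stmt_10_general {M : ℕ} (H : Matrix (Fin M) (Fin M) ℝ)
    (hH : Hᵀ * H = (M : ℝ) • 1)
    (z : Fin M → ℤ) (n : Fin M → ℝ) (y : Fin M → ℤ)
    (hy : ∀ j, y j = round (H⁻¹.mulVec (H.mulVec (fun i => (z i : ℝ)) + n) j)) :
    ((∑ j, (y j - z j) ^ 2 : ℤ) : ℝ) ≤ 4 * (∑ j, (n j) ^ 2) / M := by
  rcases Nat.eq_zero_or_pos M with rfl | hM
  · simp
  set w := H⁻¹ *ᵥ n
  have hM0 : (M : ℝ) ≠ 0 := by positivity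
  have hdet := isUnit_det_of_transpose_mul_self hM0 hH
  have hyz : ∀ j, ((y j - z j : ℤ) : ℝ) = round (w j) := fun j => by
    rw [hy j, mulVec_add, mulVec_mulVec, nonsing_inv_mul H hdet, one_mulVec, Pi.add_apply,
      round_intCast_add, add_sub_cancel_left]
  have hw : ∑ j, w j ^ 2 = (∑ j, n j ^ 2) / M := by
    rw [← dotProduct_self_eq_sum_sq, ← dotProduct_self_eq_sum_sq,
      inv_mulVec_dotProduct_inv_mulVec_self_of_transpose_mul_self hM0 hH]
  calc ((∑ j, (y j - z j) ^ 2 : ℤ) : ℝ) = ∑ j, (round (w j) : ℝ) ^ 2 := by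
        push_cast [← hyz]; rfl
    _ ≤ ∑ j, 4 * w j ^ 2 := Finset.sum_le_sum fun j _ => sq_round_le_four_mul_sq (w j)
    _ = 4 * (∑ j, n j ^ 2) / M := by rw [← Finset.mul_sum, hw, mul_div_assoc]

/-- Per-block guarantee of the SCQGT decoder: inverting the Hadamard
transform of a noisy observation and rounding coordinatewise yields an integer vector
whose squared ℓ₂ distance to the true integer vector is at most `4‖n‖₂²/M`. -/
theorem stmt_10 {M : ℕ} (hM : 1 ≤ M) (H : Matrix (Fin M) (Fin M) ℝ)
    (hentries : ∀ i j, H i j = -1 ∨ H i j = 1)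
    (hH : Hᵀ * H = (M : ℝ) • 1)
    (z : Fin M → ℤ) (n : Fin M → ℝ) (y : Fin M → ℤ)
    (hy : ∀ j, y j = round (H⁻¹.mulVec (H.mulVec (fun i => (z i : ℝ)) + n) j)) :
    ((∑ j, (y j - z j) ^ 2 : ℤ) : ℝ) ≤ 4 * (∑ j, (n j) ^ 2) / M :=
  stmt_10_general H hH z n y hy
end

section
/- Let M₀ be an s×m real matrix with all entries in {0,1} that is injective on binary vectors (for binary x, x' ∈ {0,1}^m, M₀x = M₀x' implies x = x'). Let H be a Hadamard matrix of order h ≥ 1 (entries in {−1,1}, Hᵀ H = h·I). Then there exists a decoding function Dec from ℝ^{h·s} to binary vectors in {0,1}^{h·m} such that for every binary x ∈ {0,1}^{h·m} and every noise vector n ∈ ℝ^{h·s}, the Hamming distance between Dec((H ⊗ M₀)·x + n) and x is at most 4·m·‖n‖₂²/h. -/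
/-!
Applying `h⁻¹ Hᵀ ⊗ I = H⁻¹ ⊗ I` to `y = (H ⊗ M₀) x + n` splits it into the `h` segments
`M₀ x_k + e_k`, and since `h^(-1/2) Hᵀ` is orthogonal, `∑ₖ ‖e_k‖² = ‖n‖² / h`.
As `M₀` maps binary vectors injectively to integer vectors, which lie at distance at least `1`
from each other, a segment with `‖e_k‖² < 1/4` is recovered exactly by any binary `u` with
`‖M₀ u - (M₀ x_k + e_k)‖² < 1/4`. By Markov's inequality at most `4 ‖n‖² / h` segments fail,
and each failed segment costs at most `m` coordinates.
-/

open Matrix Kronecker Finset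

def IsBinary {μ : Type*} (v : μ → ℝ) : Prop :=
  ∀ i, v i = 0 ∨ v i = 1

lemma IsBinary.mem_bot {μ : Type*} {v : μ → ℝ} (hv : IsBinary v) (i : μ) :
    v i ∈ (⊥ : Subring ℝ) := by
  rcases hv i with h | h <;> rw [h]
  exacts [zero_mem _, one_mem _]

section Matrix

variable {ι σ μ K : Type*} [Fintype ι] [DecidableEq ι]

lemma mulVec_mem_bot [Fintype μ] {M : Matrix σ μ ℝ} {u : μ → ℝ}
    (hM : ∀ i j, M i j ∈ (⊥ : Subring ℝ)) (hu : ∀ j, u j ∈ (⊥ : Subring ℝ)) (i : σ) :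
    (M *ᵥ u) i ∈ (⊥ : Subring ℝ) :=
  Subring.sum_mem _ fun j _ => Subring.mul_mem _ (hM i j) (hu j)

lemma mul_transpose_eq_smul_one_of_transpose_mul [Field K] {H : Matrix ι ι K} {c : K}
    (hc : c ≠ 0) (hH : Hᵀ * H = c • 1) : H * Hᵀ = c • 1 := by
  have hinv : Hᵀ * (c⁻¹ • H) = 1 := by
    rw [Matrix.mul_smul, hH, smul_smul, inv_mul_cancel₀ hc, one_smul]
  rw [← smul_inv_smul₀ hc (H * Hᵀ), ← Matrix.smul_mul, mul_eq_one_comm.mp hinv]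

lemma mulVec_dotProduct_mulVec_self_of_transpose_mul [CommSemiring K] [Fintype σ]
    {A : Matrix σ ι K} {c : K} (hA : Aᵀ * A = c • 1) (v : ι → K) :
    A *ᵥ v ⬝ᵥ A *ᵥ v = c * (v ⬝ᵥ v) := by
  rw [dotProduct_mulVec, ← mulVec_transpose, mulVec_mulVec, hA, smul_mulVec, one_mulVec,
    smul_dotProduct, smul_eq_mul, dotProduct_comm]

lemma one_kronecker_mulVec_apply [Semiring K] [Fintype μ] (M : Matrix σ μ K)
    (x : ι × μ → K) (k : ι) (j : σ) :
    (((1 : Matrix ι ι K) ⊗ₖ M) *ᵥ x) (k, j) = (M *ᵥ fun i => x (k, i)) j := by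
  simp [mulVec, dotProduct, Fintype.sum_prod_type, kroneckerMap_apply, one_apply, ite_mul]

end Matrix

section Rounding

variable {σ μ : Type*} [Fintype σ] [Fintype μ]

lemma eq_of_sum_sq_sub_lt_quarter {a b z : σ → ℝ} (ha : ∀ j, a j ∈ (⊥ : Subring ℝ))
    (hb : ∀ j, b j ∈ (⊥ : Subring ℝ)) (haz : ∑ j, (a j - z j) ^ 2 < 1 / 4)
    (hbz : ∑ j, (b j - z j) ^ 2 < 1 / 4) : a = b := by
  funext j
  have haj : (a j - z j) ^ 2 < 1 / 4 :=
    (single_le_sum (fun j _ => sq_nonneg (a j - z j)) (mem_univ j)).trans_lt haz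
  have hbj : (b j - z j) ^ 2 < 1 / 4 :=
    (single_le_sum (fun j _ => sq_nonneg (b j - z j)) (mem_univ j)).trans_lt hbz
  obtain ⟨p, hp⟩ := Subring.mem_bot.1 (ha j)
  obtain ⟨q, hq⟩ := Subring.mem_bot.1 (hb j)
  rw [← hp] at haj ⊢
  rw [← hq] at hbj ⊢
  have hsq : ((p - q : ℤ) : ℝ) ^ 2 < 1 := by
    push_cast
    nlinarith [sq_nonneg (p - z j + (q - z j))]
  have hpq : p - q = 0 :=
    Int.abs_lt_one_iff.1 ((sq_lt_one_iff_abs_lt_one _).1 (by exact_mod_cast hsq))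
  rw [sub_eq_zero.1 hpq]

open Classical in
/-- When no binary `u` is that close to `z`, the junk value `0` is returned. -/
noncomputable def roundDecode (M₀ : Matrix σ μ ℝ) (z : σ → ℝ) : μ → ℝ :=
  if hz : ∃ u, IsBinary u ∧ ∑ j, ((M₀ *ᵥ u) j - z j) ^ 2 < 1 / 4 then hz.choose else 0

lemma isBinary_roundDecode (M₀ : Matrix σ μ ℝ) (z : σ → ℝ) : IsBinary (roundDecode M₀ z) := by
  unfold roundDecode
  split_ifs with hz
  exacts [hz.choose_spec.1, fun _ => Or.inl rfl]

lemma roundDecode_eq {M₀ : Matrix σ μ ℝ} (hM₀ : ∀ i j, M₀ i j ∈ (⊥ : Subring ℝ))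
    (hinj : ∀ x x', IsBinary x → IsBinary x' → M₀ *ᵥ x = M₀ *ᵥ x' → x = x')
    {x : μ → ℝ} (hx : IsBinary x) {z : σ → ℝ} (hxz : ∑ j, ((M₀ *ᵥ x) j - z j) ^ 2 < 1 / 4) :
    roundDecode M₀ z = x := by
  have hz : ∃ u, IsBinary u ∧ ∑ j, ((M₀ *ᵥ u) j - z j) ^ 2 < 1 / 4 := ⟨x, hx, hxz⟩
  obtain ⟨hu, huz⟩ := hz.choose_spec
  rw [roundDecode, dif_pos hz]
  refine hinj _ _ hu hx (eq_of_sum_sq_sub_lt_quarter ?_ ?_ huz hxz) <;>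
    exact mulVec_mem_bot hM₀ (IsBinary.mem_bot ‹_›)

end Rounding

lemma card_filter_mul_le_sum {α : Type*} [Fintype α] {f : α → ℝ} (hf : ∀ a, 0 ≤ f a) (t : ℝ) :
    #{a | t ≤ f a} * t ≤ ∑ a, f a := by
  rw [← nsmul_eq_mul]
  calc #{a | t ≤ f a} • t ≤ ∑ a ∈ {a | t ≤ f a}, f a :=
        card_nsmul_le_sum _ _ _ fun a ha => (mem_filter.1 ha).2
    _ ≤ ∑ a, f a := sum_le_sum_of_subset_of_nonneg (subset_univ _) fun a _ _ => hf a

section Decoder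

variable {ι σ μ : Type*} [Fintype ι] [DecidableEq ι] [Fintype σ] [DecidableEq σ] [Fintype μ]

/-- `H⁻¹ ⊗ I` for a Hadamard matrix `H`, since then `H⁻¹ = Hᵀ / h`. -/
noncomputable def unmix (H : Matrix ι ι ℝ) : Matrix (ι × σ) (ι × σ) ℝ :=
  ((Fintype.card ι : ℝ)⁻¹ • Hᵀ) ⊗ₖ 1

noncomputable def twoStepDecode (H : Matrix ι ι ℝ) (M₀ : Matrix σ μ ℝ) (y : ι × σ → ℝ) :
    ι × μ → ℝ :=
  fun p => roundDecode M₀ (fun j => (unmix H *ᵥ y) (p.1, j)) p.2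

variable [Nonempty ι] {H : Matrix ι ι ℝ} (hH : Hᵀ * H = (Fintype.card ι : ℝ) • 1)
include hH

lemma unmix_mulVec_kronecker_mulVec (M₀ : Matrix σ μ ℝ) (x : ι × μ → ℝ) :
    unmix H *ᵥ ((H ⊗ₖ M₀) *ᵥ x) = (1 ⊗ₖ M₀) *ᵥ x := by
  rw [mulVec_mulVec, unmix, ← mul_kronecker_mul, Matrix.smul_mul, hH, smul_smul,
    inv_mul_cancel₀ (Nat.cast_ne_zero.2 Fintype.card_ne_zero), one_smul, Matrix.one_mul]

lemma transpose_unmix_mul_unmix :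
    (unmix H : Matrix (ι × σ) (ι × σ) ℝ)ᵀ * unmix H = (Fintype.card ι : ℝ)⁻¹ • 1 := by
  have hc : (Fintype.card ι : ℝ) ≠ 0 := Nat.cast_ne_zero.2 Fintype.card_ne_zero
  rw [unmix, ← kroneckerMap_transpose, transpose_one, ← mul_kronecker_mul, transpose_smul,
    transpose_transpose, Matrix.smul_mul, Matrix.mul_smul,
    mul_transpose_eq_smul_one_of_transpose_mul hc hH, smul_smul, smul_smul, Matrix.one_mul,
    smul_kronecker, one_kronecker_one]
  congr 1
  field_simp

lemma sum_sq_unmix_mulVec (n : ι × σ → ℝ) :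
    ∑ p, (unmix H *ᵥ n) p ^ 2 = (Fintype.card ι : ℝ)⁻¹ * ∑ p, n p ^ 2 := by
  simpa only [dotProduct, ← sq] using
    mulVec_dotProduct_mulVec_self_of_transpose_mul (transpose_unmix_mul_unmix hH) n

variable {M₀ : Matrix σ μ ℝ} (hM₀ : ∀ i j, M₀ i j ∈ (⊥ : Subring ℝ))
  (hinj : ∀ x x', IsBinary x → IsBinary x' → M₀ *ᵥ x = M₀ *ᵥ x' → x = x')
  {x : ι × μ → ℝ} (hx : IsBinary x) (n : ι × σ → ℝ)
include hM₀ hinj hx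

lemma twoStepDecode_apply_eq_of_sum_sq_lt {k : ι} (hk : ∑ j, (unmix H *ᵥ n) (k, j) ^ 2 < 1 / 4)
    (i : μ) : twoStepDecode H M₀ ((H ⊗ₖ M₀) *ᵥ x + n) (k, i) = x (k, i) := by
  have hseg : roundDecode M₀ (fun j => (unmix H *ᵥ ((H ⊗ₖ M₀) *ᵥ x + n)) (k, j)) =
      fun i => x (k, i) := by
    refine roundDecode_eq hM₀ hinj (fun i => hx (k, i)) ?_
    simpa [mulVec_add, unmix_mulVec_kronecker_mulVec hH, one_kronecker_mulVec_apply] using hk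
  exact congrFun hseg i

theorem card_twoStepDecode_ne_le :
    (#{p | twoStepDecode H M₀ ((H ⊗ₖ M₀) *ᵥ x + n) p ≠ x p} : ℝ) ≤
      4 * Fintype.card μ * (∑ p, n p ^ 2) / Fintype.card ι := by
  set bad : Finset ι := {k | 1 / 4 ≤ ∑ j, (unmix H *ᵥ n) (k, j) ^ 2}
  have herr : #{p | twoStepDecode H M₀ ((H ⊗ₖ M₀) *ᵥ x + n) p ≠ x p} ≤
      #bad * Fintype.card μ := by
    rw [← card_univ, ← card_product]
    refine card_le_card fun p hp => ?_
    simp only [bad, mem_filter, mem_univ, true_and, mem_product, and_true] at hp ⊢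
    by_contra! hk
    exact hp (twoStepDecode_apply_eq_of_sum_sq_lt hH hM₀ hinj hx n hk p.2)
  have hbad : #bad * (1 / 4 : ℝ) ≤ (Fintype.card ι : ℝ)⁻¹ * ∑ p, n p ^ 2 := by
    rw [← sum_sq_unmix_mulVec hH, Fintype.sum_prod_type]
    exact card_filter_mul_le_sum (fun k => sum_nonneg fun j _ => sq_nonneg _) _
  calc (#{p | twoStepDecode H M₀ ((H ⊗ₖ M₀) *ᵥ x + n) p ≠ x p} : ℝ)
      ≤ #bad * Fintype.card μ := by exact_mod_cast herr
    _ = 4 * Fintype.card μ * (#bad * (1 / 4)) := by ring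
    _ ≤ 4 * Fintype.card μ * ((Fintype.card ι : ℝ)⁻¹ * ∑ p, n p ^ 2) := by gcongr
    _ = 4 * Fintype.card μ * (∑ p, n p ^ 2) / Fintype.card ι := by ring

end Decoder

theorem stmt_13_general {s m h : ℕ} (hh : 1 ≤ h)
    (M₀ : Matrix (Fin s) (Fin m) ℝ)
    (hM₀ : ∀ i j, M₀ i j = 0 ∨ M₀ i j = 1)
    (hinj : ∀ x x' : Fin m → ℝ, (∀ i, x i = 0 ∨ x i = 1) → (∀ i, x' i = 0 ∨ x' i = 1) →
      M₀.mulVec x = M₀.mulVec x' → x = x')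
    (H : Matrix (Fin h) (Fin h) ℝ)
    (hH : Hᵀ * H = (h : ℝ) • 1) :
    ∃ Dec : (Fin h × Fin s → ℝ) → (Fin h × Fin m → ℝ),
      (∀ y i, Dec y i = 0 ∨ Dec y i = 1) ∧
      ∀ x : Fin h × Fin m → ℝ, (∀ i, x i = 0 ∨ x i = 1) →
        ∀ n : Fin h × Fin s → ℝ,
          ((univ.filter fun i => Dec ((H ⊗ₖ M₀).mulVec x + n) i ≠ x i).card : ℝ) ≤
            4 * m * (∑ j, (n j) ^ 2) / h := by
  have : Nonempty (Fin h) := Fin.pos_iff_nonempty.1 hh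
  refine ⟨twoStepDecode H M₀, fun y p => isBinary_roundDecode _ _ p.2, fun x hx n => ?_⟩
  simpa only [Fintype.card_fin] using card_twoStepDecode_ne_le (by rwa [Fintype.card_fin])
    (fun i j => IsBinary.mem_bot (hM₀ i) j) hinj hx n

/-- Correctness of the two-step (deconstruction + rounding) decoder for the
basic construction: if `M₀` is a `{0,1}`-matrix injective on binary vectors and `H` is a
Hadamard matrix of order `h ≥ 1`, then the Kronecker product `H ⊗ M₀` admits a decoder
mapping any noisy observation to a binary vector that differs from the true binary data in
at most `4·m·‖n‖₂²/h` coordinates. -/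
theorem stmt_13 {s m h : ℕ} (hh : 1 ≤ h)
    (M₀ : Matrix (Fin s) (Fin m) ℝ)
    (hM₀ : ∀ i j, M₀ i j = 0 ∨ M₀ i j = 1)
    (hinj : ∀ x x' : Fin m → ℝ, (∀ i, x i = 0 ∨ x i = 1) → (∀ i, x' i = 0 ∨ x' i = 1) →
      M₀.mulVec x = M₀.mulVec x' → x = x')
    (H : Matrix (Fin h) (Fin h) ℝ)
    (hHe : ∀ i j, H i j = -1 ∨ H i j = 1)
    (hH : Hᵀ * H = (h : ℝ) • 1) :
    ∃ Dec : (Fin h × Fin s → ℝ) → (Fin h × Fin m → ℝ),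
      (∀ y i, Dec y i = 0 ∨ Dec y i = 1) ∧
      ∀ x : Fin h × Fin m → ℝ, (∀ i, x i = 0 ∨ x i = 1) →
        ∀ n : Fin h × Fin s → ℝ,
          ((univ.filter fun i => Dec ((H ⊗ₖ M₀).mulVec x + n) i ≠ x i).card : ℝ) ≤
            4 * m * (∑ j, (n j) ^ 2) / h :=
  stmt_13_general hh M₀ hM₀ hinj H hH
end

section
/- Let Q be an s×n real matrix, c ≥ 0 a real number, and k a natural number. Suppose there exists a decoding function Dec from ℝ^s to binary vectors in {0,1}^n such that for every binary x ∈ {0,1}^n and every n' ∈ ℝ^s with ‖n'‖_∞ ≤ c, twice the Hamming distance between Dec(Qx + n') and x is strictly less than k. Then every ternary vector v ∈ ℝⁿ with ‖v‖₀ ≥ k satisfies ‖Qv‖_∞ > 2c. -/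
open Finset

/-- Reliable noisy decoding forces the detecting property: if a decoder
recovers every binary `x` from `Qx + n'` (with `‖n'‖_∞ ≤ c`) with fewer than `k/2` Hamming
errors, then every ternary `v` with `‖v‖₀ ≥ k` satisfies `‖Qv‖_∞ > 2c`.
(`‖·‖` on `Fin s → ℝ` is the sup norm.) -/
theorem stmt_14 {s n : ℕ} (Q : Matrix (Fin s) (Fin n) ℝ) (c : ℝ) (hc : 0 ≤ c) (k : ℕ)
    (Dec : (Fin s → ℝ) → (Fin n → ℝ))
    (hbin : ∀ y i, Dec y i = 0 ∨ Dec y i = 1)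
    (hDec : ∀ x : Fin n → ℝ, (∀ i, x i = 0 ∨ x i = 1) →
      ∀ n' : Fin s → ℝ, ‖n'‖ ≤ c →
        2 * (univ.filter fun i => Dec (Q.mulVec x + n') i ≠ x i).card < k) :
    ∀ v : Fin n → ℝ, (∀ i, v i = -1 ∨ v i = 0 ∨ v i = 1) →
      k ≤ (univ.filter fun i => v i ≠ 0).card →
      2 * c < ‖Q.mulVec v‖ := by
  intro v hv hk
  by_contra hle
  push_neg at hle
  -- define binary parts
  set x : Fin n → ℝ := fun i => if v i = 1 then 1 else 0 with hx
  set x' : Fin n → ℝ := fun i => if v i = -1 then 1 else 0 with hx'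
  have hxbin : ∀ i, x i = 0 ∨ x i = 1 := by
    intro i; simp only [hx]; split <;> simp
  have hx'bin : ∀ i, x' i = 0 ∨ x' i = 1 := by
    intro i; simp only [hx']; split <;> simp
  have hsub : x - x' = v := by
    funext i
    rcases hv i with h | h | h <;> simp [hx, hx', h] <;> norm_num
  -- noise vectors
  set w : Fin s → ℝ := (-(1/2) : ℝ) • Q.mulVec v with hw
  have hnw : ‖w‖ ≤ c := by
    rw [hw, norm_smul]
    have : ‖(-(1/2) : ℝ)‖ = 1/2 := by norm_num
    rw [this]
    linarith
  have hnw' : ‖-w‖ ≤ c := by rwa [norm_neg]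
  -- the two midpoint equalities
  have hQ : Q.mulVec x - Q.mulVec x' = Q.mulVec v := by
    rw [← Matrix.mulVec_sub, hsub]
  have hmid : Q.mulVec x + w = Q.mulVec x' + (-w) := by
    rw [hw]
    funext j
    have := congrFun hQ j
    simp only [Pi.sub_apply] at this
    simp only [Pi.add_apply, Pi.neg_apply, Pi.smul_apply, smul_eq_mul]
    linarith
  set y := Q.mulVec x + w with hy
  have h1 := hDec x hxbin w hnw
  have h2 := hDec x' hx'bin (-w) hnw'
  rw [← hmid] at h2
  rw [show Q.mulVec x + w = y from rfl] at h1
  -- triangle inequality on Hamming sets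
  have hsubset : (univ.filter fun i => v i ≠ 0) ⊆
      (univ.filter fun i => Dec y i ≠ x i) ∪ (univ.filter fun i => Dec y i ≠ x' i) := by
    intro i hi
    simp only [mem_filter, mem_univ, true_and] at hi
    simp only [mem_union, mem_filter, mem_univ, true_and]
    by_contra h
    push_neg at h
    have : x i = x' i := h.1 ▸ h.2 ▸ rfl
    have := congrFun hsub i
    simp only [Pi.sub_apply] at this
    rw [‹x i = x' i›] at this
    exact hi (by linarith)
  have hcard : (univ.filter fun i => v i ≠ 0).card ≤
      (univ.filter fun i => Dec y i ≠ x i).card + (univ.filter fun i => Dec y i ≠ x' i).card :=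
    le_trans (card_le_card hsubset) (card_union_le _ _)
  omega
end

section
/- Let Q be an s×n real matrix, c > 0 a real number, and k a natural number. Suppose every ternary vector v ∈ ℝⁿ with ‖v‖₀ ≥ k satisfies ‖Qv‖_∞ ≥ 2c. Then there exists a decoding function Dec from ℝ^s to binary vectors in {0,1}^n such that for every binary x ∈ {0,1}^n and every n' ∈ ℝ^s with ‖n'‖_∞ < c, the Hamming distance between Dec(Qx + n') and x is strictly less than k. -/
open Finset

/-- The detecting property yields a reliable decoder: if every ternary `v`
with `‖v‖₀ ≥ k` satisfies `‖Qv‖_∞ ≥ 2c` (with `c > 0`), then there is a decoder producing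
binary vectors that recovers every binary `x` from `Qx + n'` (with `‖n'‖_∞ < c`) with
fewer than `k` Hamming errors. (`‖·‖` on `Fin s → ℝ` is the sup norm.) -/
theorem stmt_15 {s n : ℕ} (Q : Matrix (Fin s) (Fin n) ℝ) (c : ℝ) (hc : 0 < c) (k : ℕ)
    (hdet : ∀ v : Fin n → ℝ, (∀ i, v i = -1 ∨ v i = 0 ∨ v i = 1) →
      k ≤ (univ.filter fun i => v i ≠ 0).card → 2 * c ≤ ‖Q.mulVec v‖) :
    ∃ Dec : (Fin s → ℝ) → (Fin n → ℝ),
      (∀ y i, Dec y i = 0 ∨ Dec y i = 1) ∧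
      ∀ x : Fin n → ℝ, (∀ i, x i = 0 ∨ x i = 1) →
        ∀ n' : Fin s → ℝ, ‖n'‖ < c →
          (univ.filter fun i => Dec (Q.mulVec x + n') i ≠ x i).card < k := by
  classical
  refine ⟨fun y => if h : ∃ z : Fin n → ℝ, (∀ i, z i = 0 ∨ z i = 1) ∧ ‖Q.mulVec z - y‖ < c
    then h.choose else 0, ?_, ?_⟩
  · intro y i
    by_cases h : ∃ z : Fin n → ℝ, (∀ i, z i = 0 ∨ z i = 1) ∧ ‖Q.mulVec z - y‖ < c
    · simp only [dif_pos h]; exact h.choose_spec.1 i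
    · simp [dif_neg h]
  · intro x hx n' hn'
    set y := Q.mulVec x + n' with hy
    have hex : ∃ z : Fin n → ℝ, (∀ i, z i = 0 ∨ z i = 1) ∧ ‖Q.mulVec z - y‖ < c := by
      refine ⟨x, hx, ?_⟩
      have : Q.mulVec x - y = -n' := by simp [hy]
      rw [this, norm_neg]; exact hn'
    simp only [dif_pos hex]
    obtain ⟨hz01, hzn⟩ := hex.choose_spec
    set z := hex.choose with hzdef
    by_contra hk
    push_neg at hk
    have hv : ∀ i, (z - x) i = -1 ∨ (z - x) i = 0 ∨ (z - x) i = 1 := by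
      intro i
      rcases hz01 i with h1 | h1 <;> rcases hx i with h2 | h2 <;>
        simp [Pi.sub_apply, h1, h2]
    have hcard : k ≤ (univ.filter fun i => (z - x) i ≠ 0).card := by
      refine hk.trans_eq (congrArg Finset.card ?_)
      apply Finset.filter_congr
      intro i _
      simp [Pi.sub_apply, sub_ne_zero]
    have h2c := hdet (z - x) hv hcard
    have hQv : ‖Q.mulVec (z - x)‖ < 2 * c := by
      have heq : Q.mulVec (z - x) = (Q.mulVec z - y) + n' := by
        rw [Matrix.mulVec_sub, hy]; abel
      rw [heq]
      calc ‖(Q.mulVec z - y) + n'‖ ≤ ‖Q.mulVec z - y‖ + ‖n'‖ := norm_add_le _ _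
        _ < c + c := add_lt_add hzn hn'
        _ = 2 * c := by ring
    linarith
end

section
/- Let M be an s₁×n real matrix and Q an s₂×n real matrix, let b be a natural number, c ≥ 0 and e ≥ 0 real numbers. Suppose Dec_A maps ℝ^{s₁} to binary vectors in {0,1}^n and satisfies: for every binary x ∈ {0,1}^n and every n₁ ∈ ℝ^{s₁} with ‖n₁‖_∞ ≤ c, the Hamming distance between Dec_A(Mx + n₁) and x is at most b. Suppose Dec_B maps ℝ^{s₂} to ℝ^n and satisfies: for every ternary p ∈ ℝⁿ with ‖p‖₀ ≤ b and every n₂ ∈ ℝ^{s₂} with ‖n₂‖_∞ ≤ c, ‖Dec_B(Qp + n₂) − p‖₁ ≤ e. Define the composed decoder Dec(y₁, y₂) = Dec_A(y₁) + Dec_B(y₂ − Q·Dec_A(y₁)). Then for every binary x ∈ {0,1}^n and all noise vectors n₁ ∈ ℝ^{s₁}, n₂ ∈ ℝ^{s₂} with ‖n₁‖_∞ ≤ c and ‖n₂‖_∞ ≤ c, ‖Dec(Mx + n₁, Qx + n₂) − x‖₁ ≤ e. -/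
open Finset

/-- Correctness of the two-step (Step A + Step B) composed decoder: Step A
decodes the CQGT part with at most `b` Hamming errors; Step B applied to the residual
observation recovers the ternary error vector up to ℓ₁ error `e`; the composition
`Dec(y₁, y₂) = Dec_A(y₁) + Dec_B(y₂ − Q·Dec_A(y₁))` recovers `x` up to ℓ₁ error `e`.
(`‖·‖` on `Fin s → ℝ` is the sup norm.) -/
theorem stmt_16 {n s₁ s₂ : ℕ}
    (M : Matrix (Fin s₁) (Fin n) ℝ) (Q : Matrix (Fin s₂) (Fin n) ℝ)
    (b : ℕ) (c e : ℝ) (hc : 0 ≤ c) (he : 0 ≤ e)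
    (DecA : (Fin s₁ → ℝ) → (Fin n → ℝ))
    (hAbin : ∀ y i, DecA y i = 0 ∨ DecA y i = 1)
    (hA : ∀ x : Fin n → ℝ, (∀ i, x i = 0 ∨ x i = 1) →
      ∀ n₁ : Fin s₁ → ℝ, ‖n₁‖ ≤ c →
        (univ.filter fun i => DecA (M.mulVec x + n₁) i ≠ x i).card ≤ b)
    (DecB : (Fin s₂ → ℝ) → (Fin n → ℝ))
    (hB : ∀ p : Fin n → ℝ, (∀ i, p i = -1 ∨ p i = 0 ∨ p i = 1) →
      (univ.filter fun i => p i ≠ 0).card ≤ b →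
      ∀ n₂ : Fin s₂ → ℝ, ‖n₂‖ ≤ c →
        ∑ i, |DecB (Q.mulVec p + n₂) i - p i| ≤ e) :
    ∀ x : Fin n → ℝ, (∀ i, x i = 0 ∨ x i = 1) →
      ∀ n₁ : Fin s₁ → ℝ, ‖n₁‖ ≤ c → ∀ n₂ : Fin s₂ → ℝ, ‖n₂‖ ≤ c →
        ∑ i, |(DecA (M.mulVec x + n₁) i +
            DecB ((Q.mulVec x + n₂) - Q.mulVec (DecA (M.mulVec x + n₁))) i) - x i| ≤ e := by
  intro x hx n₁ hn₁ n₂ hn₂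
  set xh := DecA (M.mulVec x + n₁) with hxh
  set p : Fin n → ℝ := fun i => x i - xh i with hp
  have hpt : ∀ i, p i = -1 ∨ p i = 0 ∨ p i = 1 := by
    intro i
    rcases hx i with h1 | h1 <;> rcases hAbin (M.mulVec x + n₁) i with h2 | h2 <;>
      rw [← hxh] at h2 <;> simp [hp, h1, h2]
  have hcard : (univ.filter fun i => p i ≠ 0).card ≤ b := by
    refine le_trans (Finset.card_le_card ?_) (hA x hx n₁ hn₁)
    intro i hi
    simp only [Finset.mem_filter, Finset.mem_univ, true_and] at hi ⊢
    intro h; rw [← hxh] at h; exact hi (by simp [hp, h])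
  have hq : (Q.mulVec x + n₂) - Q.mulVec xh = Q.mulVec p + n₂ := by
    have : p = x - xh := by funext i; simp [hp]
    rw [this, Matrix.mulVec_sub]
    funext j; simp; ring
  have := hB p hpt hcard n₂ hn₂
  rw [← hq] at this
  refine le_trans (le_of_eq ?_) this
  congr 1; funext i; congr 1; simp [hp]; ring
end
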